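/- Let S be a decision rule system with n(S) > 0, and let α = {a_{i_1}=δ_1, …, a_{i_m}=δ_m} be a consistent equation system such that a_{i_1}, …, a_{i_m} ∈ A(S) and, for j = 1, …, m, δ_j ∈ EV_S(a_{i_j}). Then h_EAR(S) ≥ h_EAR(S_α). -/

import Mathlib

/-! Formalization of decision rule systems and decision trees
(Durdymyradov & Moshkov, "Greedy Algorithm for Inference of Decision Trees
from Decision Rule Systems"). -/

/-- Values of attributes: `some δ` is a natural number value, `none` is the
special symbol `*` (interpreted as a value not occurring in the system). -/
abbrev Val := Option ℕ

/-- A decision rule `(a_{i₁}=δ₁) ∧ ⋯ ∧ (a_{iₘ}=δₘ) → σ`: the left-hand side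
is a finite set of equations (attribute, value), the right-hand side a decision. -/
structure Rule where
  lhs : Finset (ℕ × ℕ)
  rhs : ℕ
deriving DecidableEq

namespace Rule

/-- `A(r)`: the set of attributes of a rule. -/
def attrs (r : Rule) : Finset ℕ := r.lhs.image Prod.fst

/-- `K(r)`: the equation system of the left-hand side of a rule. -/
def K (r : Rule) : Finset (ℕ × Val) := r.lhs.image (fun p => (p.1, some p.2))

/-- the length of a rule -/
def len (r : Rule) : ℕ := r.lhs.card

/-- A rule is wellformed if the attributes in its left-hand side are pairwise
different, i.e. each attribute carries at most one equation. -/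
def WF (r : Rule) : Prop := ∀ p ∈ r.lhs, ∀ q ∈ r.lhs, p.1 = q.1 → p = q

end Rule

/-- `A(S)`: the set of attributes of a system of decision rules. -/
def attrsS (S : Finset Rule) : Finset ℕ := S.biUnion Rule.attrs

/-- `n(S) = |A(S)|`. -/
def nS (S : Finset Rule) : ℕ := (attrsS S).card

/-- `d(S)`: maximum length of a rule of `S`. -/
def dS (S : Finset Rule) : ℕ := S.sup Rule.len

/-- `V_S(a)`: the set of values δ such that the equation `a = δ` occurs in `S`. -/
def VS (S : Finset Rule) (a : ℕ) : Finset ℕ :=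
  S.biUnion (fun r => (r.lhs.filter (fun p => p.1 = a)).image Prod.snd)

/-- `EV_S(a) = V_S(a) ∪ {*}`. -/
def EVS (S : Finset Rule) (a : ℕ) : Finset Val := insert none ((VS S a).image some)

/-- `k(S) = max{|V_S(a)| : a ∈ A(S)}`. -/
def kS (S : Finset Rule) : ℕ := (attrsS S).sup (fun a => (VS S a).card)

/-- A (wellformed) decision rule system: a finite nonempty set of wellformed rules. -/
def SysWF (S : Finset Rule) : Prop := S.Nonempty ∧ ∀ r ∈ S, r.WF

/-- An equation system is consistent if it does not assign two different values
to the same attribute. -/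
def Consistent (E : Finset (ℕ × Val)) : Prop :=
  ∀ p ∈ E, ∀ q ∈ E, p.1 = q.1 → p.2 = q.2

instance : DecidablePred Consistent := fun E => by unfold Consistent; infer_instance

/-- `r_α`: the rule obtained from `r` by deleting from its left-hand side all
equations belonging to `α`. -/
def Rule.restrict (r : Rule) (α : Finset (ℕ × Val)) : Rule :=
  ⟨r.lhs.filter (fun p => ((p.1, (some p.2 : Val)) ∉ α)), r.rhs⟩

/-- `S_α`: the set of rules `r_α` for `r ∈ S` with `K(r) ∪ α` consistent. -/
def sysRestrict (S : Finset Rule) (α : Finset (ℕ × Val)) : Finset Rule :=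
  (S.filter (fun r => Consistent (r.K ∪ α))).image (fun r => r.restrict α)

/-- Extended decision trees: terminal nodes are labeled with sets of rules, and a
working node is labeled with an attribute and has one child for each value
(only the children corresponding to values in `EV_S(a)` are relevant). -/
inductive DT where
  | leaf (τ : Finset Rule) : DT
  | node (a : ℕ) (c : Val → DT) : DT

/-- `Γ` is an extended decision tree over `S`: working nodes are labeled with
attributes of `A(S)` (with edges labeled by the elements of `EV_S(a)`),
terminal nodes with subsets of `S`. -/
def DT.Over (S : Finset Rule) : DT → Prop
  | .leaf τ => τ ⊆ S
  | .node a c => a ∈ attrsS S ∧ ∀ v ∈ EVS S a, DT.Over S (c v)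

/-- `h(Γ)`: the maximum number of working nodes in a complete path of `Γ`. -/
def DT.depth (S : Finset Rule) : DT → ℕ
  | .leaf _ => 0
  | .node a c => 1 + (EVS S a).sup (fun v => DT.depth S (c v))

/-- The number of terminal nodes of `Γ`. -/
def DT.numLeaves (S : Finset Rule) : DT → ℕ
  | .leaf _ => 1
  | .node a c => ∑ v ∈ EVS S a, DT.numLeaves S (c v)

/-- `Γ` solves `EAR(S)` starting from the already accumulated equation system `E`:
for every complete path `ξ` with consistent `K(ξ)`, every rule of the terminal
label `τ(ξ)` satisfies `K(r) ⊆ K(ξ)`, and every other rule of `S` has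
`K(r) ∪ K(ξ)` inconsistent. -/
def DT.SolvesFrom (S : Finset Rule) : DT → Finset (ℕ × Val) → Prop
  | .leaf τ, E => Consistent E →
      (∀ r ∈ τ, r.K ⊆ E) ∧ ∀ r ∈ S, r ∉ τ → ¬ Consistent (r.K ∪ E)
  | .node a c, E => ∀ v ∈ EVS S a, DT.SolvesFrom S (c v) (insert (a, v) E)

/-- `Γ` is a decision tree over `S` solving the problem `EAR(S)`. -/
def DT.SolvesEAR (S : Finset Rule) (Γ : DT) : Prop := Γ.Over S ∧ Γ.SolvesFrom S ∅

/-- `h_EAR(S)`: the minimum depth of a decision tree over `S` solving `EAR(S)`. -/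
noncomputable def hEAR (S : Finset Rule) : ℕ :=
  sInf {n | ∃ Γ : DT, DT.SolvesEAR S Γ ∧ DT.depth S Γ = n}

/-- A node cover of the hypergraph `G(S)`. -/
def IsNodeCover (S : Finset Rule) (B : Finset ℕ) : Prop :=
  B ⊆ attrsS S ∧ ∀ r ∈ S, r.attrs.Nonempty → (r.attrs ∩ B).Nonempty

/-- `β(S)`: the minimum cardinality of a node cover of `G(S)`. -/
noncomputable def betaS (S : Finset Rule) : ℕ :=
  sInf {k | ∃ B : Finset ℕ, IsNodeCover S B ∧ B.card = k}

/-- `M` is a possible choice of `S^max`: a set of rules of `S` of length `d(S)`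
containing exactly one representative from each equivalence class
(`r₁ ∼ r₂ iff K(r₁) = K(r₂)`) of the set of rules of length `d(S)`, and
no other rules. -/
def IsMaxSet (S M : Finset Rule) : Prop :=
  (∀ r ∈ M, r ∈ S ∧ r.len = dS S) ∧
  (∀ r ∈ S, r.len = dS S → ∃ r' ∈ M, r'.K = r.K) ∧
  (∀ r₁ ∈ M, ∀ r₂ ∈ M, r₁.K = r₂.K → r₁ = r₂)

/-- `δ̄ ∈ EV(S)`, a tuple represented as a function on attributes. -/
def InEV (S : Finset Rule) (f : ℕ → Val) : Prop := ∀ a ∈ attrsS S, f a ∈ EVS S a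

/-- `K(S, δ̄)`. -/
def KofTuple (S : Finset Rule) (f : ℕ → Val) : Finset (ℕ × Val) :=
  (attrsS S).image (fun a => (a, f a))

/-- The rule `r` is realizable for the tuple `δ̄`, i.e. `K(r) ⊆ K(S, δ̄)`. -/
def Realizable (S : Finset Rule) (f : ℕ → Val) (r : Rule) : Prop :=
  r.K ⊆ KofTuple S f

instance (S : Finset Rule) (f : ℕ → Val) : DecidablePred (Realizable S f) :=
  fun r => by unfold Realizable; infer_instance

/-! Take an optimal tree `Γ` for `EAR(S)`. Keep a working node exactly when its attribute is
not assigned by `α` and still occurs in `S_α`; replace every other node by its child along the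
value `α` assigns to the attribute (along `*` if there is none), and relabel each terminal set
`τ` by `τ_α`. The depth does not grow. Along every path `ξ` of `Γ` the equations on removed
attributes agree with `α`, so for a rule `r` with `K(r) ∪ α` consistent and the shortened
path `ξ'`, `K(r) ⊆ K(ξ)` gives `K(r_α) ⊆ K(ξ')`, and consistency of `K(r_α) ∪ K(ξ')` gives
consistency of `K(r) ∪ K(ξ)`. -/

open Finset

lemma Consistent.mono {E F : Finset (ℕ × Val)} (hF : Consistent F) (hEF : E ⊆ F) :
    Consistent E :=
  fun p hp q hq => hF p (hEF hp) q (hEF hq)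

lemma consistent_of_consistent_filter {E : Finset (ℕ × Val)} (P : ℕ → Prop)
    [DecidablePred P] (g : ℕ → Val) (hP : Consistent (E.filter fun p => P p.1))
    (hg : ∀ p ∈ E, ¬ P p.1 → p.2 = g p.1) : Consistent E := by
  intro p hp q hq hpq
  by_cases h : P p.1
  · exact hP p (mem_filter.2 ⟨hp, h⟩) q (mem_filter.2 ⟨hq, hpq ▸ h⟩) hpq
  · rw [hg p hp h, hg q hq (hpq ▸ h), hpq]

lemma Rule.mem_K_restrict {r : Rule} {α : Finset (ℕ × Val)} {p : ℕ × Val} :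
    p ∈ (r.restrict α).K ↔ p ∈ r.K ∧ p ∉ α := by
  simp only [Rule.K, Rule.restrict, mem_image, mem_filter]
  constructor
  · rintro ⟨q, ⟨hq, hqα⟩, rfl⟩
    exact ⟨⟨q, hq, rfl⟩, hqα⟩
  · rintro ⟨⟨q, hq, rfl⟩, hqα⟩
    exact ⟨q, ⟨hq, hqα⟩, rfl⟩

lemma mem_attrsS_of_mem_K {S : Finset Rule} {r : Rule} {p : ℕ × Val} (hr : r ∈ S)
    (hp : p ∈ r.K) : p.1 ∈ attrsS S := by
  obtain ⟨q, hq, rfl⟩ := mem_image.1 hp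
  exact mem_biUnion.2 ⟨r, hr, mem_image_of_mem _ hq⟩

lemma restrict_mem_sysRestrict {S : Finset Rule} {α : Finset (ℕ × Val)} {r : Rule}
    (hr : r ∈ S) (hrα : Consistent (r.K ∪ α)) : r.restrict α ∈ sysRestrict S α :=
  mem_image_of_mem _ (mem_filter.2 ⟨hr, hrα⟩)

lemma sysRestrict_mono {S T : Finset Rule} (α : Finset (ℕ × Val)) (h : T ⊆ S) :
    sysRestrict T α ⊆ sysRestrict S α :=
  image_subset_image (filter_subset_filter _ h)

lemma VS_sysRestrict_subset (S : Finset Rule) (α : Finset (ℕ × Val)) (a : ℕ) :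
    VS (sysRestrict S α) a ⊆ VS S a := by
  simp only [VS, sysRestrict, biUnion_subset, forall_mem_image]
  intro r hr
  exact (image_subset_image (filter_subset_filter _ (filter_subset _ _))).trans
    (subset_biUnion_of_mem (fun r => (r.lhs.filter fun p => p.1 = a).image Prod.snd)
      (mem_filter.1 hr).1)

lemma EVS_sysRestrict_subset (S : Finset Rule) (α : Finset (ℕ × Val)) (a : ℕ) :
    EVS (sysRestrict S α) a ⊆ EVS S a :=
  insert_subset_insert _ (image_subset_image (VS_sysRestrict_subset S α a))

section Restrict

variable {S : Finset Rule} {α : Finset (ℕ × Val)}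

def attrsOf (α : Finset (ℕ × Val)) : Finset ℕ := α.image Prod.fst

lemma mem_attrsOf {a : ℕ} : a ∈ attrsOf α ↔ ∃ v, (a, v) ∈ α := by
  simp [attrsOf]

open Classical in
noncomputable def valueOf (α : Finset (ℕ × Val)) (a : ℕ) : Val :=
  if h : ∃ v, (a, v) ∈ α then h.choose else none

lemma valueOf_mem {a : ℕ} (h : ∃ v, (a, v) ∈ α) : (a, valueOf α a) ∈ α := by
  rw [valueOf, dif_pos h]
  exact h.choose_spec

lemma valueOf_mem_EVS (hα : ∀ p ∈ α, p.2 ∈ EVS S p.1) (a : ℕ) : valueOf α a ∈ EVS S a := by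
  by_cases h : ∃ v, (a, v) ∈ α
  · exact hα (a, valueOf α a) (valueOf_mem h)
  · rw [valueOf, dif_neg h]
    exact mem_insert_self _ _

def IsKept (S : Finset Rule) (α : Finset (ℕ × Val)) (a : ℕ) : Prop :=
  a ∉ attrsOf α ∧ a ∈ attrsS (sysRestrict S α)

instance : DecidablePred (IsKept S α) := fun _ => by unfold IsKept; infer_instance

lemma isKept_of_mem_K_restrict {r : Rule} {p : ℕ × Val} (hr : r ∈ S)
    (hrα : Consistent (r.K ∪ α)) (hp : p ∈ (r.restrict α).K) : IsKept S α p.1 := by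
  obtain ⟨hpK, hpα⟩ := Rule.mem_K_restrict.1 hp
  refine ⟨fun h => ?_, mem_attrsS_of_mem_K (restrict_mem_sysRestrict hr hrα) hp⟩
  obtain ⟨v, hv⟩ := mem_attrsOf.1 h
  have : p.2 = v := hrα p (mem_union_left _ hpK) _ (mem_union_right _ hv) rfl
  exact hpα (by rwa [← this] at hv)

lemma mem_K_restrict_of_isKept {r : Rule} {p : ℕ × Val} (hp : p ∈ r.K)
    (hk : IsKept S α p.1) : p ∈ (r.restrict α).K :=
  Rule.mem_K_restrict.2 ⟨hp, fun h => hk.1 (mem_attrsOf.2 ⟨p.2, h⟩)⟩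

lemma eq_valueOf_of_not_isKept {r : Rule} {p : ℕ × Val} (hr : r ∈ S)
    (hrα : Consistent (r.K ∪ α)) (hp : p ∈ r.K) (hk : ¬ IsKept S α p.1) :
    p.2 = valueOf α p.1 := by
  by_cases h : ∃ v, (p.1, v) ∈ α
  · exact hrα p (mem_union_left _ hp) _ (mem_union_right _ (valueOf_mem h)) rfl
  · exact absurd (isKept_of_mem_K_restrict hr hrα
      (Rule.mem_K_restrict.2 ⟨hp, fun hpα => h ⟨p.2, hpα⟩⟩)) hk

noncomputable def DT.restrict (S : Finset Rule) (α : Finset (ℕ × Val)) : DT → DT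
  | .leaf τ => .leaf (sysRestrict τ α)
  | .node a c =>
      if IsKept S α a then .node a (fun v => DT.restrict S α (c v))
      else DT.restrict S α (c (valueOf α a))

lemma DT.Over.restrict (hα : ∀ p ∈ α, p.2 ∈ EVS S p.1) {Γ : DT} (hΓ : Γ.Over S) :
    (Γ.restrict S α).Over (sysRestrict S α) := by
  induction Γ with
  | leaf τ => exact sysRestrict_mono α hΓ
  | node a c ih =>
    rw [DT.restrict]
    split_ifs with hk
    · exact ⟨hk.2, fun v hv => ih v (hΓ.2 v (EVS_sysRestrict_subset S α a hv))⟩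
    · exact ih _ (hΓ.2 _ (valueOf_mem_EVS hα a))

lemma DT.depth_restrict_le (hα : ∀ p ∈ α, p.2 ∈ EVS S p.1) (Γ : DT) :
    (Γ.restrict S α).depth (sysRestrict S α) ≤ Γ.depth S := by
  induction Γ with
  | leaf τ => exact le_rfl
  | node a c ih =>
    rw [DT.restrict]
    split_ifs
    · refine Nat.add_le_add_left (Finset.sup_le fun v hv => (ih v).trans ?_) 1
      exact le_sup (f := fun v => (c v).depth S) (EVS_sysRestrict_subset S α a hv)
    · calc _ ≤ (c (valueOf α a)).depth S := ih _
        _ ≤ (EVS S a).sup (fun v => (c v).depth S) :=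
          le_sup (f := fun v => (c v).depth S) (valueOf_mem_EVS hα a)
        _ ≤ (DT.node a c).depth S := Nat.le_add_left _ 1

def AgreesOffKept (S : Finset Rule) (α E : Finset (ℕ × Val)) : Prop :=
  ∀ p ∈ E, ¬ IsKept S α p.1 → p.2 = valueOf α p.1

lemma AgreesOffKept.consistent {E : Finset (ℕ × Val)} (hE : AgreesOffKept S α E)
    (hE' : Consistent (E.filter fun p => IsKept S α p.1)) : Consistent E :=
  consistent_of_consistent_filter _ _ hE' hE

lemma AgreesOffKept.consistent_K_union {E : Finset (ℕ × Val)} {r : Rule}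
    (hE : AgreesOffKept S α E) (hr : r ∈ S) (hrα : Consistent (r.K ∪ α))
    (h : Consistent ((r.restrict α).K ∪ E.filter fun p => IsKept S α p.1)) :
    Consistent (r.K ∪ E) := by
  refine consistent_of_consistent_filter (IsKept S α) (valueOf α) (h.mono ?_) ?_
  · intro p hp
    obtain ⟨hp, hk⟩ := mem_filter.1 hp
    rcases mem_union.1 hp with hp | hp
    · exact mem_union_left _ (mem_K_restrict_of_isKept hp hk)
    · exact mem_union_right _ (mem_filter.2 ⟨hp, hk⟩)
  · intro p hp hk
    rcases mem_union.1 hp with hp | hp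
    · exact eq_valueOf_of_not_isKept hr hrα hp hk
    · exact hE p hp hk

lemma solvesFrom_restrict_leaf {τ : Finset Rule} {E : Finset (ℕ × Val)} (hτ : τ ⊆ S)
    (hsolves : (DT.leaf τ).SolvesFrom S E) (hE : AgreesOffKept S α E) :
    (DT.leaf (sysRestrict τ α)).SolvesFrom (sysRestrict S α)
      (E.filter fun p => IsKept S α p.1) := by
  intro hE'
  obtain ⟨hreal, hincons⟩ := hsolves (hE.consistent hE')
  constructor
  · simp only [sysRestrict, mem_image, mem_filter]
    rintro _ ⟨r, ⟨hrτ, hrα⟩, rfl⟩ p hp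
    exact mem_filter.2 ⟨hreal r hrτ (Rule.mem_K_restrict.1 hp).1,
      isKept_of_mem_K_restrict (hτ hrτ) hrα hp⟩
  · simp only [sysRestrict, mem_image, mem_filter]
    rintro _ ⟨r, ⟨hrS, hrα⟩, rfl⟩ hrτ' hcons
    have hrτ : r ∉ τ := fun hrτ => hrτ' ⟨r, ⟨hrτ, hrα⟩, rfl⟩
    exact hincons r hrS hrτ (hE.consistent_K_union hrS hrα hcons)

lemma DT.SolvesFrom.restrict (hα : ∀ p ∈ α, p.2 ∈ EVS S p.1) {Γ : DT}
    {E : Finset (ℕ × Val)} (hΓ : Γ.Over S) (hsolves : Γ.SolvesFrom S E)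
    (hE : AgreesOffKept S α E) :
    (Γ.restrict S α).SolvesFrom (sysRestrict S α) (E.filter fun p => IsKept S α p.1) := by
  induction Γ generalizing E with
  | leaf τ => exact solvesFrom_restrict_leaf hΓ hsolves hE
  | node a c ih =>
    rw [DT.restrict]
    split_ifs with hk
    · intro v hv
      have hv' := EVS_sysRestrict_subset S α a hv
      have hE' : AgreesOffKept S α (insert (a, v) E) := by
        intro p hp hpk
        rcases mem_insert.1 hp with rfl | hp
        · exact absurd hk hpk
        · exact hE p hp hpk
      simpa only [filter_insert, if_pos hk] using ih v (hΓ.2 v hv') (hsolves v hv') hE'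
    · have hv := valueOf_mem_EVS hα a
      have hE' : AgreesOffKept S α (insert (a, valueOf α a) E) := by
        intro p hp hpk
        rcases mem_insert.1 hp with rfl | hp
        · rfl
        · exact hE p hp hpk
      simpa only [filter_insert, if_neg hk] using ih _ (hΓ.2 _ hv) (hsolves _ hv) hE'

end Restrict

def DT.full (S : Finset Rule) : List ℕ → Finset (ℕ × Val) → DT
  | [], E => .leaf (S.filter fun r => r.K ⊆ E)
  | a :: L, E => .node a fun v => DT.full S L (insert (a, v) E)

lemma DT.over_full (S : Finset Rule) {L : List ℕ} (hL : ∀ a ∈ L, a ∈ attrsS S)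
    (E : Finset (ℕ × Val)) : (DT.full S L E).Over S := by
  induction L generalizing E with
  | nil => exact filter_subset _ _
  | cons a L ih =>
    exact ⟨hL a List.mem_cons_self, fun v _ =>
      ih (fun b hb => hL b (List.mem_cons_of_mem a hb)) _⟩

lemma DT.solvesFrom_full (S : Finset Rule) {L : List ℕ} {E : Finset (ℕ × Val)}
    (hL : ∀ a ∈ attrsS S, a ∈ L ∨ ∃ v, (a, v) ∈ E) : (DT.full S L E).SolvesFrom S E := by
  induction L generalizing E with
  | nil =>
    refine fun _ => ⟨fun r hr => (mem_filter.1 hr).2, fun r hr hrτ hcons => hrτ ?_⟩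
    refine mem_filter.2 ⟨hr, fun p hp => ?_⟩
    obtain ⟨v, hv⟩ := (hL p.1 (mem_attrsS_of_mem_K hr hp)).resolve_left List.not_mem_nil
    have : p.2 = v := hcons p (mem_union_left _ hp) _ (mem_union_right _ hv) rfl
    rwa [← this] at hv
  | cons a L ih =>
    intro v _
    refine ih fun b hb => ?_
    rcases hL b hb with h | ⟨w, hw⟩
    · rcases List.mem_cons.1 h with rfl | h
      · exact Or.inr ⟨v, mem_insert_self _ _⟩
      · exact Or.inl h
    · exact Or.inr ⟨w, mem_insert_of_mem hw⟩

lemma exists_solvesEAR (S : Finset Rule) : ∃ Γ : DT, Γ.SolvesEAR S :=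
  ⟨DT.full S (attrsS S).toList ∅, And.intro (DT.over_full S (fun _ => mem_toList.1) ∅)
    (DT.solvesFrom_full S fun _ ha => Or.inl (mem_toList.2 ha))⟩

lemma hEAR_le {S : Finset Rule} {Γ : DT} (hΓ : Γ.SolvesEAR S) : hEAR S ≤ Γ.depth S :=
  Nat.sInf_le ⟨Γ, hΓ, rfl⟩

lemma exists_solvesEAR_depth_eq_hEAR (S : Finset Rule) :
    ∃ Γ : DT, Γ.SolvesEAR S ∧ Γ.depth S = hEAR S := by
  obtain ⟨Γ, hΓ⟩ := exists_solvesEAR S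
  have hne : {n | ∃ Γ : DT, Γ.SolvesEAR S ∧ Γ.depth S = n}.Nonempty := ⟨_, Γ, hΓ, rfl⟩
  exact Nat.sInf_mem hne

theorem hEAR_restrict_le_general (S : Finset Rule)
    (α : Finset (ℕ × Val))
    (hα : ∀ p ∈ α, p.1 ∈ attrsS S ∧ p.2 ∈ EVS S p.1) :
    hEAR (sysRestrict S α) ≤ hEAR S := by
  obtain ⟨Γ, ⟨hover, hsolves⟩, hdepth⟩ := exists_solvesEAR_depth_eq_hEAR S
  have hval : ∀ p ∈ α, p.2 ∈ EVS S p.1 := fun p hp => (hα p hp).2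
  have hsolves' := hsolves.restrict hval hover (fun p hp => absurd hp (notMem_empty p))
  rw [filter_empty] at hsolves'
  calc hEAR (sysRestrict S α)
      ≤ (Γ.restrict S α).depth (sysRestrict S α) := hEAR_le (And.intro (hover.restrict hval) hsolves')
    _ ≤ Γ.depth S := Γ.depth_restrict_le hval
    _ = hEAR S := hdepth

/-- Lemma 1: Let `S` be a decision rule system with `n(S) > 0` and `α` be a
consistent equation system whose attributes belong to `A(S)` and whose values
satisfy `δ ∈ EV_S(a)`. Then `h_EAR(S) ≥ h_EAR(S_α)`. -/
theorem hEAR_restrict_le (S : Finset Rule) (hS : SysWF S) (hn : 0 < nS S)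
    (α : Finset (ℕ × Val)) (hcons : Consistent α)
    (hα : ∀ p ∈ α, p.1 ∈ attrsS S ∧ p.2 ∈ EVS S p.1) :
    hEAR (sysRestrict S α) ≤ hEAR S :=
  hEAR_restrict_le_general S α hα
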